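/- arXiv:math/0411197 — 5 statements merged into one kernel-verified Lean document; each statement's English description precedes it below -/
import Mathlib

section
/- Let n ≥ 3. For a random word s_{i_1} s_{i_2} s_{i_3} of length 3, with i_1, i_2, i_3 independent and uniform in {1, …, n}, the expected number of inversions of the product permutation in S_{n+1} equals 3 − 6/n + 8/n² − 4/n³. -/
/-- The adjacent transposition `s_i` swapping positions `i` and `i+1` in `S_{n+1}`. -/
def adjT (n : ℕ) (i : Fin n) : Equiv.Perm (Fin (n + 1)) :=
  Equiv.swap i.castSucc i.succ

/-- The number of inversions of a permutation of `{1, …, n+1}`. -/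
def invCount (n : ℕ) (π : Equiv.Perm (Fin (n + 1))) : ℕ :=
  (Finset.univ.filter fun p : Fin (n + 1) × Fin (n + 1) => p.1 < p.2 ∧ π p.2 < π p.1).card

/-- The permutation obtained from the word `s_{w 0} s_{w 1} ⋯ s_{w (t-1)}`. -/
def walkPerm (n t : ℕ) (w : Fin t → Fin n) : Equiv.Perm (Fin (n + 1)) :=
  ((List.ofFn w).map (adjT n)).prod

/-!
Right multiplication by `s_i` moves every inversion of `π` except the pair `(i, i + 1)`, so
`inv (π * s_i) = inv π + 1` whenever `π i < π (i + 1)`. Hence `s_i s_j s_k` has three inversions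
when the word is reduced (`i ≠ j`, `j ≠ k`, and `i = k` only if `|i - j| = 1`); otherwise it
collapses to a single generator, by `s_i ^ 2 = 1` or by `s_i s_j = s_j s_i` for `|i - j| ≥ 2`.
The reduced words are the `n (n - 1) (n - 2)` words with distinct letters and the `2 (n - 1)` words
`i j i` with `|i - j| = 1` (adjacency in `pathGraph n`), so the sum of the inversion numbers is
`n ^ 3 + 2 (n (n - 1) (n - 2) + 2 (n - 1))`.
-/

open Finset Function SimpleGraph

section Inversions

variable {n : ℕ}

def inversions (π : Equiv.Perm (Fin (n + 1))) : Finset (Fin (n + 1) × Fin (n + 1)) :=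
  univ.filter fun p => p.1 < p.2 ∧ π p.2 < π p.1

@[simp] lemma mem_inversions {π : Equiv.Perm (Fin (n + 1))} {p : Fin (n + 1) × Fin (n + 1)} :
    p ∈ inversions π ↔ p.1 < p.2 ∧ π p.2 < π p.1 := by
  simp [inversions]

lemma invCount_eq_card_inversions (π : Equiv.Perm (Fin (n + 1))) :
    invCount n π = #(inversions π) := rfl

@[simp] lemma adjT_mul_self (i : Fin n) : adjT n i * adjT n i = 1 := Equiv.swap_mul_self _ _

lemma adjT_lt_adjT {i : Fin n} {a b : Fin (n + 1)} (hab : a < b)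
    (he : (a, b) ≠ (i.castSucc, i.succ)) : adjT n i a < adjT n i b := by
  simp only [adjT, Equiv.swap_apply_def]
  split_ifs <;>
    simp only [ne_eq, Prod.mk.injEq, Fin.lt_def, Fin.ext_iff, Fin.val_castSucc, Fin.val_succ]
      at * <;> omega

lemma prodMap_adjT_mem_erase_inversions {π : Equiv.Perm (Fin (n + 1))} {i : Fin n}
    {p : Fin (n + 1) × Fin (n + 1)}
    (hp : p ∈ (inversions (π * adjT n i)).erase (i.castSucc, i.succ)) :
    Prod.map (adjT n i) (adjT n i) p ∈ (inversions π).erase (i.castSucc, i.succ) := by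
  obtain ⟨a, b⟩ := p
  simp only [mem_erase, mem_inversions, Equiv.Perm.mul_apply, Prod.map] at hp ⊢
  obtain ⟨he, hab, hπ⟩ := hp
  refine ⟨?_, adjT_lt_adjT hab he, hπ⟩
  simp only [adjT, ne_eq, Prod.mk.injEq, Equiv.swap_apply_eq_iff, Equiv.swap_apply_left,
    Equiv.swap_apply_right]
  rintro ⟨rfl, rfl⟩
  exact absurd hab (not_lt.2 Fin.castSucc_lt_succ.le)

lemma card_erase_inversions_mul_adjT (π : Equiv.Perm (Fin (n + 1))) (i : Fin n) :
    #((inversions (π * adjT n i)).erase (i.castSucc, i.succ))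
      = #((inversions π).erase (i.castSucc, i.succ)) := by
  have hinv : ∀ p, Prod.map (adjT n i) (adjT n i) (Prod.map (adjT n i) (adjT n i) p) = p := by
    simp [adjT]
  refine card_nbij' _ _ (fun p hp => prodMap_adjT_mem_erase_inversions hp)
    (fun p hp => ?_) (fun p _ => hinv p) (fun p _ => hinv p)
  exact prodMap_adjT_mem_erase_inversions (by rwa [mul_assoc, adjT_mul_self, mul_one])

lemma invCount_mul_adjT_of_lt {π : Equiv.Perm (Fin (n + 1))} {i : Fin n}
    (h : π i.castSucc < π i.succ) : invCount n (π * adjT n i) = invCount n π + 1 := by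
  have hlt : i.castSucc < i.succ := Fin.castSucc_lt_succ
  have hmem : (i.castSucc, i.succ) ∈ inversions (π * adjT n i) := by
    simpa [adjT, hlt] using h
  have hnotMem : (i.castSucc, i.succ) ∉ inversions π := by
    simpa [hlt] using h.le
  rw [invCount_eq_card_inversions, invCount_eq_card_inversions, ← card_erase_add_one hmem,
    card_erase_inversions_mul_adjT, erase_eq_of_notMem hnotMem]

lemma invCount_one : invCount n 1 = 0 := by
  rw [invCount_eq_card_inversions, card_eq_zero, eq_empty_iff_forall_notMem]
  simp only [mem_inversions, Equiv.Perm.one_apply, not_and, not_lt]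
  exact fun _ h => h.le

lemma invCount_adjT (i : Fin n) : invCount n (adjT n i) = 1 := by
  simpa [invCount_one] using invCount_mul_adjT_of_lt (π := 1) (i := i) Fin.castSucc_lt_succ

end Inversions

section ThreeLetterWords

variable {n : ℕ}

lemma walkPerm_three (w : Fin 3 → Fin n) :
    walkPerm n 3 w = adjT n (w 0) * adjT n (w 1) * adjT n (w 2) := by
  simp [walkPerm, List.ofFn_succ, mul_assoc]

lemma adjT_mul_comm {i j : Fin n} (h : ¬(pathGraph n).Adj i j) :
    adjT n i * adjT n j = adjT n j * adjT n i := by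
  rw [pathGraph_adj] at h
  ext x
  simp only [adjT, Equiv.Perm.mul_apply, Equiv.swap_apply_def]
  split_ifs <;> simp only [Fin.ext_iff, Fin.val_castSucc, Fin.val_succ] at * <;> omega

def IsReducedTriple (i j k : Fin n) : Prop :=
  i ≠ j ∧ j ≠ k ∧ (i = k → (pathGraph n).Adj i j)

lemma invCount_of_isReducedTriple {i j k : Fin n} (h : IsReducedTriple i j k) :
    invCount n (adjT n i * adjT n j * adjT n k) = 3 := by
  obtain ⟨hij, hjk, hik⟩ := h
  rw [pathGraph_adj] at hik
  have hj : adjT n i j.castSucc < adjT n i j.succ := by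
    simp only [adjT, Equiv.swap_apply_def]
    split_ifs <;>
      simp only [ne_eq, Fin.lt_def, Fin.ext_iff, Fin.val_castSucc, Fin.val_succ] at * <;> omega
  have hk : (adjT n i * adjT n j) k.castSucc < (adjT n i * adjT n j) k.succ := by
    simp only [adjT, Equiv.Perm.mul_apply, Equiv.swap_apply_def]
    split_ifs <;>
      simp only [ne_eq, Fin.lt_def, Fin.ext_iff, Fin.val_castSucc, Fin.val_succ] at * <;> omega
  rw [invCount_mul_adjT_of_lt hk, invCount_mul_adjT_of_lt hj, invCount_adjT]

lemma invCount_of_not_isReducedTriple {i j k : Fin n} (h : ¬IsReducedTriple i j k) :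
    invCount n (adjT n i * adjT n j * adjT n k) = 1 := by
  rcases eq_or_ne i j with rfl | hij
  · rw [adjT_mul_self, one_mul, invCount_adjT]
  rcases eq_or_ne j k with rfl | hjk
  · rw [mul_assoc, adjT_mul_self, mul_one, invCount_adjT]
  obtain ⟨rfl, hadj⟩ : i = k ∧ ¬(pathGraph n).Adj i j := by
    simpa [IsReducedTriple, hij, hjk] using h
  rw [adjT_mul_comm hadj, mul_assoc, adjT_mul_self, mul_one, invCount_adjT]

lemma isReducedTriple_iff (w : Fin 3 → Fin n) :
    IsReducedTriple (w 0) (w 1) (w 2) ↔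
      Injective w ∨ (w 0 = w 2 ∧ (pathGraph n).Adj (w 0) (w 1)) := by
  have hinj : Injective w ↔ w 0 ≠ w 1 ∧ w 1 ≠ w 2 ∧ w 0 ≠ w 2 := by
    refine ⟨fun h => ⟨h.ne (by decide), h.ne (by decide), h.ne (by decide)⟩, ?_⟩
    rintro ⟨h01, h12, h02⟩ a b hab
    fin_cases a <;> fin_cases b <;> simp_all [eq_comm]
  rw [hinj]
  constructor
  · rintro ⟨h01, h12, h02⟩
    by_cases h : w 0 = w 2
    · exact .inr ⟨h, h02 h⟩
    · exact .inl ⟨h01, h12, h⟩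
  · rintro (⟨h01, h12, h02⟩ | ⟨h02, hadj⟩)
    · exact ⟨h01, h12, fun h => absurd h h02⟩
    · exact ⟨hadj.ne, h02 ▸ hadj.ne.symm, fun _ => hadj⟩

end ThreeLetterWords

lemma card_filter_injective (α β : Type*) [Fintype α] [DecidableEq α] [Fintype β]
    [DecidableEq β] :
    #{f : α → β | Injective f} = (Fintype.card β).descFactorial (Fintype.card α) := by
  rw [← Fintype.card_subtype, Fintype.card_congr (Equiv.subtypeInjectiveEquivEmbedding α β),
    Fintype.card_embedding_eq]

lemma card_filter_val_add_one_eq (m : ℕ) :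
    #{p : Fin (m + 1) × Fin (m + 1) | (p.1 : ℕ) + 1 = p.2} = m := by
  refine ((card_fin m).symm.trans (card_bij (fun a _ => (a.castSucc, a.succ)) ?_ ?_ ?_)).symm
  · simp
  · simp [Fin.castSucc_inj]
  · rintro ⟨a, b⟩ h
    simp only [mem_filter, mem_univ, true_and] at h
    exact ⟨⟨a, by omega⟩, mem_univ _, by ext <;> simp [h]⟩

open Classical in
lemma card_filter_pathGraph_adj (m : ℕ) :
    #{p : Fin (m + 1) × Fin (m + 1) | (pathGraph (m + 1)).Adj p.1 p.2} = 2 * m := by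
  have hswap : #{p : Fin (m + 1) × Fin (m + 1) | (p.2 : ℕ) + 1 = p.1}
      = #{p : Fin (m + 1) × Fin (m + 1) | (p.1 : ℕ) + 1 = p.2} :=
    card_nbij' Prod.swap Prod.swap (by simp [Set.MapsTo]) (by simp [Set.MapsTo])
      (fun _ _ => rfl) (fun _ _ => rfl)
  simp only [pathGraph_adj, filter_or]
  rw [card_union_of_disjoint, hswap, card_filter_val_add_one_eq, two_mul]
  rw [disjoint_filter]
  omega

open Classical in
lemma card_filter_isReducedTriple (m : ℕ) :
    #{w : Fin 3 → Fin (m + 1) | IsReducedTriple (w 0) (w 1) (w 2)}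
      = (m + 1).descFactorial 3 + 2 * m := by
  have hpal : #{w : Fin 3 → Fin (m + 1) | w 0 = w 2 ∧ (pathGraph (m + 1)).Adj (w 0) (w 1)}
      = #{p : Fin (m + 1) × Fin (m + 1) | (pathGraph (m + 1)).Adj p.1 p.2} := by
    refine card_nbij' (fun w => (w 0, w 1)) (fun p => ![p.1, p.2, p.1]) ?_ ?_ ?_ ?_
    · intro w hw
      simp only [coe_filter, mem_univ, true_and, Set.mem_ofPred_eq] at hw ⊢
      exact hw.2
    · intro p hp
      simpa using hp
    · intro w hw
      simp only [coe_filter, mem_univ, true_and, Set.mem_ofPred_eq] at hw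
      ext a; fin_cases a <;> simp [hw.1]
    · intro p _; simp
  simp only [isReducedTriple_iff, filter_or]
  rw [card_union_of_disjoint, card_filter_injective, hpal, card_filter_pathGraph_adj]
  · simp
  · rw [disjoint_filter]
    exact fun w _ hinj h => hinj.ne (by decide) h.1

open Classical in
lemma sum_invCount_walkPerm_three (n : ℕ) :
    ∑ w : Fin 3 → Fin n, invCount n (walkPerm n 3 w)
      = n ^ 3 + 2 * #{w : Fin 3 → Fin n | IsReducedTriple (w 0) (w 1) (w 2)} := by
  have h : ∀ w : Fin 3 → Fin n, invCount n (walkPerm n 3 w)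
      = 1 + 2 * if IsReducedTriple (w 0) (w 1) (w 2) then 1 else 0 := by
    intro w
    rw [walkPerm_three]
    split_ifs with hw
    · exact invCount_of_isReducedTriple hw
    · exact invCount_of_not_isReducedTriple hw
  simp only [h, sum_add_distrib, ← mul_sum, sum_boole, sum_const, card_univ, Fintype.card_fun,
    Fintype.card_fin, smul_eq_mul, mul_one, Nat.cast_id]

theorem expected_inversions_three_steps (n : ℕ) (hn : 3 ≤ n) :
    (∑ w : Fin 3 → Fin n, (invCount n (walkPerm n 3 w) : ℝ)) / (n : ℝ) ^ 3
      = 3 - 6 / (n : ℝ) + 8 / (n : ℝ) ^ 2 - 4 / (n : ℝ) ^ 3 := by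
  obtain ⟨m, rfl⟩ : ∃ m, n = m + 2 + 1 := ⟨n - 3, by omega⟩
  rw [← Nat.cast_sum, sum_invCount_walkPerm_three, card_filter_isReducedTriple]
  push_cast [Nat.descFactorial]
  field_simp
  ring
end

section
/- Let E_t denote the expected number of inversions after t uniformly random adjacent transposition steps in S_{n+1}, and let D_t = Σ_{j=1}^{n} Prob(π_t(j) > π_t(j+1)) be the expected number of descents of the permutation π_t after t steps. Then E_{t+1} = E_t + 1 − (2/n) D_t. -/
lemma swap_mono {n : ℕ} (m : Fin n) {p q : Fin (n + 1)}
    (hpq : p < q) (h : ¬(p = m.castSucc ∧ q = m.succ)) :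
    Equiv.swap m.castSucc m.succ p < Equiv.swap m.castSucc m.succ q := by
  have hcs : (m.castSucc : ℕ) = (m : ℕ) := rfl
  have hss : (m.succ : ℕ) = (m : ℕ) + 1 := rfl
  rcases eq_or_ne p m.castSucc with hp | hp
  · rcases eq_or_ne q m.succ with hq | hq
    · exact absurd ⟨hp, hq⟩ h
    · have hq' : q ≠ m.castSucc := fun e => absurd (e ▸ hpq) (by simp [hp, e])
      rw [hp, Equiv.swap_apply_left, Equiv.swap_apply_of_ne_of_ne hq' hq]
      have : (m : ℕ) < (q : ℕ) := by rw [hp] at hpq; exact hpq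
      have : (m : ℕ) + 1 ≠ (q : ℕ) := fun e => hq (Fin.ext e.symm)
      exact Fin.lt_def.mpr (by omega)
  · rcases eq_or_ne p m.succ with hp' | hp'
    · have hq1 : q ≠ m.castSucc := by
        intro e
        have := hpq
        rw [hp', e] at this
        exact absurd this (by simp [Fin.lt_def, hcs, hss])
      have hq2 : q ≠ m.succ := fun e => by rw [hp', e] at hpq; exact absurd hpq (lt_irrefl _)
      rw [hp', Equiv.swap_apply_right, Equiv.swap_apply_of_ne_of_ne hq1 hq2]
      have : (m : ℕ) + 1 < (q : ℕ) := by rw [hp'] at hpq; exact hpq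
      exact Fin.lt_def.mpr (by omega)
    · rw [Equiv.swap_apply_of_ne_of_ne hp hp']
      rcases eq_or_ne q m.castSucc with hq | hq
      · rw [hq, Equiv.swap_apply_left]
        have h1 : (p : ℕ) < (m : ℕ) := by rw [hq] at hpq; exact hpq
        exact Fin.lt_def.mpr (by omega)
      · rcases eq_or_ne q m.succ with hq' | hq'
        · rw [hq', Equiv.swap_apply_right]
          have h1 : (p : ℕ) < (m : ℕ) + 1 := by rw [hq'] at hpq; exact hpq
          have h2 : (p : ℕ) ≠ (m : ℕ) := fun e => hp (Fin.ext e)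
          exact Fin.lt_def.mpr (by omega)
        · rw [Equiv.swap_apply_of_ne_of_ne hq hq']
          exact hpq

lemma key (n : ℕ) (m : Fin n) (π : Equiv.Perm (Fin (n + 1))) :
    (invCount n (π * adjT n m) : ℝ)
      = (invCount n π : ℝ) + 1
        - 2 * (if π m.succ < π m.castSucc then (1 : ℝ) else 0) := by
  classical
  set a := m.castSucc
  set b := m.succ
  have hab : a < b := by
    simp [a, b, Fin.lt_def]
  set σ := Equiv.swap a b with hσ
  set S := (Finset.univ.filter fun p : Fin (n + 1) × Fin (n + 1) => p.1 < p.2 ∧ π p.2 < π p.1)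
    with hS
  set T := (Finset.univ.filter fun p : Fin (n + 1) × Fin (n + 1) =>
      p.1 < p.2 ∧ (π * adjT n m) p.2 < (π * adjT n m) p.1) with hT
  have happ : ∀ x, (π * adjT n m) x = π (σ x) := fun x => rfl
  have hσa : σ a = b := Equiv.swap_apply_left a b
  have hσb : σ b = a := Equiv.swap_apply_right a b
  -- the map g
  have hg : T.erase (a, b) = (S.erase (a, b)).image (fun p => (σ p.1, σ p.2)) := by
    ext ⟨p, q⟩
    simp only [Finset.mem_erase, Finset.mem_image, Finset.mem_filter, Finset.mem_univ, true_and,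
      hS, hT, Prod.mk.injEq, ne_eq, Prod.ext_iff]
    constructor
    · rintro ⟨hne, hpq, hinv⟩
      refine ⟨(σ p, σ q), ⟨?_, ?_, ?_⟩, by simp [σ], by simp [σ]⟩
      · intro ⟨h1, h2⟩
        apply hne
        have : p = σ a ∧ q = σ b := by
          constructor
          · rw [← h1]; simp [σ]
          · rw [← h2]; simp [σ]
        rw [hσa, hσb] at this
        -- p = b, q = a contradicts p < q since a < b
        exact absurd (this.1 ▸ this.2 ▸ hpq) (not_lt.mpr hab.le)
      · exact swap_mono m hpq (fun ⟨h1, h2⟩ => hne ⟨h1, h2⟩)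
      · simpa [happ, σ] using hinv
    · rintro ⟨⟨u, v⟩, ⟨hne, huv, hinv⟩, h1, h2⟩
      subst h1; subst h2
      refine ⟨?_, swap_mono m huv (fun ⟨h1, h2⟩ => hne ⟨h1, h2⟩), ?_⟩
      · intro ⟨h1, h2⟩
        have hu : u = b := by have := congrArg σ h1; simpa [σ, hσa] using this
        have hv : v = a := by have := congrArg σ h2; simpa [σ, hσb] using this
        rw [hu, hv] at huv
        exact absurd huv (not_lt.mpr hab.le)
      · simpa [happ, σ] using hinv
  have hinj : Function.Injective (fun p : Fin (n+1) × Fin (n+1) => (σ p.1, σ p.2)) := by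
    intro x y h
    simp only [Prod.mk.injEq] at h
    exact Prod.ext (σ.injective h.1) (σ.injective h.2)
  have hcard : (T.erase (a, b)).card = (S.erase (a, b)).card := by
    rw [hg, Finset.card_image_of_injective _ hinj]
  have hmemT : (a, b) ∈ T ↔ π a < π b := by
    simp [hT, hab, happ, hσa, hσb]
  have hmemS : (a, b) ∈ S ↔ π b < π a := by
    simp [hS, hab]
  have hne : π a ≠ π b := fun e => (hab.ne (π.injective e)).elim
  have hTcount : invCount n (π * adjT n m) = T.card := rfl
  have hScount : invCount n π = S.card := rfl
  rcases lt_or_gt_of_ne hne with h | h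
  · -- π a < π b : not a descent, (a,b) ∈ T, ∉ S
    have h1 : (a, b) ∈ T := hmemT.mpr h
    have h2 : (a, b) ∉ S := fun hx => absurd (hmemS.mp hx) (not_lt.mpr h.le)
    have : T.card = S.card + 1 := by
      rw [← Finset.card_erase_add_one h1, hcard, Finset.erase_eq_of_notMem h2]
    rw [hTcount, hScount, this, if_neg (not_lt.mpr h.le)]
    push_cast; ring
  · have h1 : (a, b) ∉ T := fun hx => absurd (hmemT.mp hx) (not_lt.mpr h.le)
    have h2 : (a, b) ∈ S := hmemS.mpr h
    have : S.card = T.card + 1 := by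
      rw [← Finset.card_erase_add_one h2, ← hcard, Finset.erase_eq_of_notMem h1]
    rw [hTcount, hScount, this, if_pos h]
    push_cast; ring

lemma walk_snoc (n t : ℕ) (w : Fin t → Fin n) (m : Fin n) :
    walkPerm n (t + 1) (Fin.snoc w m) = walkPerm n t w * adjT n m := by
  unfold walkPerm
  rw [List.ofFn_succ']
  simp [Fin.init_snoc, List.concat_eq_append, List.map_append]

theorem expected_inversions_recursion (n t : ℕ) (hn : 1 ≤ n) :
    (∑ w : Fin (t + 1) → Fin n, (invCount n (walkPerm n (t + 1) w) : ℝ)) / (n : ℝ) ^ (t + 1)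
      = (∑ w : Fin t → Fin n, (invCount n (walkPerm n t w) : ℝ)) / (n : ℝ) ^ t
        + 1
        - (2 / (n : ℝ)) *
          ∑ m : Fin n,
            ((Finset.univ.filter fun w : Fin t → Fin n =>
                walkPerm n t w m.succ < walkPerm n t w m.castSucc).card : ℝ) / (n : ℝ) ^ t := by
  classical
  have hn0 : (n : ℝ) ≠ 0 := by positivity
  have hsum :
      (∑ w : Fin (t + 1) → Fin n, (invCount n (walkPerm n (t + 1) w) : ℝ))
        = ∑ p : Fin n × (Fin t → Fin n),
            (invCount n (walkPerm n (t + 1) (Fin.snocEquiv (fun _ => Fin n) p)) : ℝ) :=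
    (Fintype.sum_equiv (Fin.snocEquiv (fun _ => Fin n)) _ _ (fun p => rfl)).symm
  rw [hsum]
  rw [Fintype.sum_prod_type]
  have hmain : ∀ m : Fin n, ∀ w : Fin t → Fin n,
      (invCount n (walkPerm n (t + 1) (Fin.snocEquiv (fun _ => Fin n) (m, w))) : ℝ)
        = (invCount n (walkPerm n t w) : ℝ) + 1
          - 2 * (if walkPerm n t w m.succ < walkPerm n t w m.castSucc then (1:ℝ) else 0) := by
    intro m w
    have : Fin.snocEquiv (fun _ => Fin n) (m, w) = Fin.snoc w m := rfl
    rw [this, walk_snoc, key]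
  have hsumite : ∀ m : Fin n,
      (∑ w : Fin t → Fin n,
        (if walkPerm n t w m.succ < walkPerm n t w m.castSucc then (1:ℝ) else 0))
      = ((Finset.univ.filter fun w : Fin t → Fin n =>
                walkPerm n t w m.succ < walkPerm n t w m.castSucc).card : ℝ) := by
    intro m
    rw [Finset.sum_boole]
  calc (∑ m : Fin n, ∑ w : Fin t → Fin n,
        (invCount n (walkPerm n (t + 1) (Fin.snocEquiv (fun _ => Fin n) (m, w))) : ℝ)) / (n:ℝ)^(t+1)
      = (∑ m : Fin n, ((∑ w : Fin t → Fin n, (invCount n (walkPerm n t w) : ℝ))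
          + (n:ℝ)^t
          - 2 * ((Finset.univ.filter fun w : Fin t → Fin n =>
                walkPerm n t w m.succ < walkPerm n t w m.castSucc).card : ℝ))) / (n:ℝ)^(t+1) := by
        congr 1
        refine Finset.sum_congr rfl fun m _ => ?_
        rw [← hsumite m]
        simp only [hmain m]
        rw [Finset.sum_sub_distrib, Finset.sum_add_distrib, ← Finset.mul_sum,
          Finset.sum_const, Finset.card_univ, nsmul_eq_mul, mul_one]
        congr 2
        push_cast [Fintype.card_fun]
        simp
    _ = _ := by
        rw [Finset.sum_sub_distrib, Finset.sum_add_distrib, ← Finset.mul_sum,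
          Finset.sum_const, Finset.sum_const, Finset.card_univ, Fintype.card_fin,
          nsmul_eq_mul, nsmul_eq_mul]
        simp only [← Finset.sum_div]
        rw [pow_succ]
        field_simp
end

section
/- For all integers r ≥ 2 and n ≥ 1, Σ_{k=1}^{r} (−1)^k (n + 1 − k) [C(2r−1, r−k) − C(2r−1, r−k−1)] = −(n+1)·C_{r−1}, where C_{r−1} = (1/r)·C(2r−2, r−1) is a Catalan number. -/
noncomputable def g0 (r j : ℕ) : ℚ := if j < r then ((2*r-1).choose (r-j-1) : ℚ) else 0
noncomputable def g1 (r j : ℕ) : ℚ := if j < r then ((2*r-2).choose (r-j-1) : ℚ) else 0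
noncomputable def g2 (r j : ℕ) : ℚ := if j+1 < r then ((2*r-3).choose (r-j-2) : ℚ) else 0

noncomputable def Hq (r n j : ℕ) : ℚ :=
  (2*(n:ℚ)+3-2*r) * (-(((2*r-2).choose (r-1) : ℕ) : ℚ) + (-1)^j * g1 r j)
  + 2*(2*(r:ℚ)-1) * (-(((2*r-3).choose (r-2) : ℕ) : ℚ) + (-1)^j * g2 r j)
  + ((n:ℚ)+1) * (((2*r-1).choose (r-1) : ℕ) : ℚ)
  - ((n:ℚ)+1-j) * (-1)^j * g0 r j

lemma step (r n i : ℕ) (hi : i < r) :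
    (-1:ℚ)^(i+1) * ((n:ℚ)+1-((i+1:ℕ):ℚ)) *
      (((2*r-1).choose (r-(i+1)) : ℚ)
        - (if (i+1)+1 ≤ r then ((2*r-1).choose (r-(i+1)-1) : ℚ) else 0)) =
    Hq r n (i+1) - Hq r n i := by
  obtain ⟨d, rfl⟩ : ∃ d, r = i + 1 + d := ⟨r - (i+1), by omega⟩
  match d with
  | 0 =>
    simp only [Hq, g0, g1, g2]
    norm_num
    push_cast
    ring
  | 1 =>
    simp only [Hq, g0, g1, g2,
      show i+1+1 - (i+1) - 1 = 0 from by omega,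
      show i+1+1 - i - 1 = 1 from by omega,
      show i+1+1 - i - 2 = 0 from by omega,
      show i+1+1 - (i+1) - 2 = 0 from by omega,
      if_pos (show i < i+1+1 from by omega),
      if_pos (show i+1 < i+1+1 from by omega),
      if_neg (show ¬ (i+1+1 < i+1+1) from by omega),
      if_pos (show i+1 < i+1+1 from by omega),
      Nat.choose_zero_right, Nat.choose_one_right]
    norm_num
    push_cast
    ring
  | (t+2) =>
    have A1 : 2*(i+1+(t+2))-1 = 2*i+2*t+5 := by omega
    have A2 : 2*(i+1+(t+2))-2 = 2*i+2*t+4 := by omega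
    have A3 : 2*(i+1+(t+2))-3 = 2*i+2*t+3 := by omega
    simp only [Hq, g0, g1, g2, A1, A2, A3,
      show i+1+(t+2) - (i+1) = t+2 from by omega,
      show i+1+(t+2) - (i+1) - 1 = t+1 from by omega,
      show i+1+(t+2) - i - 1 = t+2 from by omega,
      show i+1+(t+2) - i - 2 = t+1 from by omega,
      show i+1+(t+2) - (i+1) - 2 = t from by omega,
      show i+1+(t+2) - 1 = i+t+2 from by omega,
      show i+1+(t+2) - 2 = i+t+1 from by omega,
      if_pos (show i < i+1+(t+2) from by omega),
      if_pos (show i+1 < i+1+(t+2) from by omega),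
      if_pos (show i+1+1 < i+1+(t+2) from by omega),
      if_pos (show i+1+1 ≤ i+1+(t+2) from by omega)]
    have h1 : ((2*i+2*t+5).choose (t+2) : ℚ)
        = (2*i+2*t+4).choose (t+1) + (2*i+2*t+4).choose (t+2) := by
      rw [show 2*i+2*t+5 = (2*i+2*t+4)+1 from by omega, Nat.choose_succ_succ]
      push_cast; ring
    have h2 : ((2*i+2*t+4).choose (t+1) : ℚ)
        = (2*i+2*t+3).choose t + (2*i+2*t+3).choose (t+1) := by
      rw [show 2*i+2*t+4 = (2*i+2*t+3)+1 from by omega, Nat.choose_succ_succ]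
      push_cast; ring
    have h3 : ((2*i+2*t+5 : ℕ) : ℚ) * (2*i+2*t+4).choose (t+1)
        = ((2*i+2*t+5).choose (t+2) : ℚ) * (t+2) := by
      have := Nat.add_one_mul_choose_eq (2*i+2*t+4) (t+1)
      exact_mod_cast congrArg (Nat.cast : ℕ → ℚ) this
    push_cast at h1 h2 h3 ⊢
    linear_combination ((-1:ℚ)^(i+1)) *
      ((2*(n:ℚ)+3-2*((i:ℚ)+(t:ℚ)+3)) * h1 + 2*(2*(i:ℚ)+2*(t:ℚ)+5) * h2)
      + 2*((-1:ℚ)^i) * h3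

theorem alternating_ballot_sum (r n : ℕ) (hr : 2 ≤ r) (hn : 1 ≤ n) :
    ∑ k ∈ Finset.Icc 1 r,
        (-1 : ℚ) ^ k * ((n : ℚ) + 1 - (k : ℚ)) *
          (((2 * r - 1).choose (r - k) : ℚ)
            - (if k + 1 ≤ r then ((2 * r - 1).choose (r - k - 1) : ℚ) else 0))
      = -((n : ℚ) + 1) * ((1 / (r : ℚ)) * ((2 * r - 2).choose (r - 1) : ℚ)) := by
  have hsum : ∑ k ∈ Finset.Icc 1 r,
        (-1 : ℚ) ^ k * ((n : ℚ) + 1 - (k : ℚ)) *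
          (((2 * r - 1).choose (r - k) : ℚ)
            - (if k + 1 ≤ r then ((2 * r - 1).choose (r - k - 1) : ℚ) else 0))
      = Hq r n r - Hq r n 0 := by
    rw [← Finset.Ico_add_one_right_eq_Icc, Finset.sum_Ico_eq_sum_range]
    simp only [Nat.add_sub_cancel, Nat.succ_sub_one]
    rw [← Finset.sum_range_sub (fun j => Hq r n j) r]
    apply Finset.sum_congr rfl
    intro i hi
    rw [Finset.mem_range] at hi
    rw [add_comm 1 i]
    exact step r n i hi
  rw [hsum]
  obtain ⟨s, rfl⟩ : ∃ s, r = s + 2 := ⟨r - 2, by omega⟩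
  simp only [Hq, g0, g1, g2,
    show (s+2) - 1 = s+1 from by omega,
    show (s+2) - 2 = s from by omega,
    show 2*(s+2)-1 = 2*s+3 from by omega,
    show 2*(s+2)-2 = 2*s+2 from by omega,
    show 2*(s+2)-3 = 2*s+1 from by omega,
    show (s+2) - 0 - 1 = s+1 from by omega,
    show (s+2) - 0 - 2 = s from by omega,
    if_pos (show 0 < s+2 from by omega),
    if_pos (show 0+1 < s+2 from by omega),
    if_neg (show ¬ (s+2 < s+2) from by omega),
    if_neg (show ¬ (s+2+1 < s+2) from by omega)]
  -- relations: (s+2) * C(2s+3, s+1) = (2s+3) * C(2s+2, s+1)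
  have h4 : ((s:ℚ)+2) * (2*s+3).choose (s+1) = (2*(s:ℚ)+3) * (2*s+2).choose (s+1) := by
    have hN : (2*s+3) * (2*s+2).choose (s+1) = (2*s+3).choose (s+2) * (s+2) := by
      simpa [Nat.succ_eq_add_one] using Nat.add_one_mul_choose_eq (2*s+2) (s+1)
    have hsym : (2*s+3).choose (s+2) = (2*s+3).choose (s+1) := by
      have := Nat.choose_symm (show s+2 ≤ 2*s+3 by omega)
      rw [show 2*s+3-(s+2) = s+1 from by omega] at this
      omega
    rw [hsym] at hN
    have h := congrArg (Nat.cast : ℕ → ℚ) hN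
    push_cast at h
    linarith
  have h5 : 2 * ((2*s+1).choose s : ℚ) = (2*s+2).choose (s+1) := by
    have hp : (2*s+2).choose (s+1) = (2*s+1).choose s + (2*s+1).choose (s+1) := by
      simpa [Nat.succ_eq_add_one] using Nat.choose_succ_succ (2*s+1) s
    have hsym : (2*s+1).choose (s+1) = (2*s+1).choose s := by
      have := Nat.choose_symm (show s+1 ≤ 2*s+1 by omega)
      rw [show 2*s+1-(s+1) = s from by omega] at this
      omega
    have h := congrArg (Nat.cast : ℕ → ℚ) hp
    rw [hsym] at h
    push_cast at h
    linarith
  have hr0 : ((s:ℚ)+2) ≠ 0 := by positivity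
  push_cast
  field_simp
  linear_combination ((n:ℚ)+1)*h4 - ((2*(s:ℚ)+3)*((s:ℚ)+2))*h5
end

section
/- Let p_t(i,j) = Prob(π_t(i) < π_t(j)) where π_t is the permutation after t uniformly random adjacent transposition steps in S_{n+1}, started at the identity. Then for positions i, j with |i − j| ≥ 2, the one-step recursion p_{t+1}(i,j) = p_t(i,j) + (1/n)·[ (p_t(i−1,j) − p_t(i,j)) + (p_t(i+1,j) − p_t(i,j)) + (p_t(i,j−1) − p_t(i,j)) + (p_t(i,j+1) − p_t(i,j)) ] holds, where terms with an index outside {1, …, n+1} are omitted. -/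
/-- The grid neighbors of `(i, j)` in the `(n+1) × (n+1)` grid graph:
points differing by 1 in exactly one coordinate. -/
def gridNbrs (n : ℕ) (i j : Fin (n + 1)) : Finset (Fin (n + 1) × Fin (n + 1)) :=
  Finset.univ.filter fun q : Fin (n + 1) × Fin (n + 1) =>
    (q.1 = i ∧ ((q.2 : ℕ) + 1 = (j : ℕ) ∨ (j : ℕ) + 1 = (q.2 : ℕ))) ∨
    (q.2 = j ∧ ((q.1 : ℕ) + 1 = (i : ℕ) ∨ (i : ℕ) + 1 = (q.1 : ℕ)))

/-- `pWalk n t i j = Prob(π_t(i) < π_t(j))` for the random walk of `t` uniform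
adjacent transpositions in `S_{n+1}`. -/
noncomputable def pWalk (n t : ℕ) (i j : Fin (n + 1)) : ℝ :=
  ((Finset.univ.filter fun w : Fin t → Fin n =>
      walkPerm n t w i < walkPerm n t w j).card : ℝ) / (n : ℝ) ^ t

lemma adjT_val (n : ℕ) (m : Fin n) (x : Fin (n + 1)) :
    ((adjT n m x : Fin (n+1)) : ℕ)
      = if (x:ℕ) = (m:ℕ) then (m:ℕ)+1 else if (x:ℕ) = (m:ℕ)+1 then (m:ℕ) else (x:ℕ) := by
  unfold adjT
  rcases eq_or_ne x m.castSucc with h | h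
  · subst h; simp
  · rcases eq_or_ne x m.succ with h2 | h2
    · subst h2
      rw [Equiv.swap_apply_right]
      simp
    · rw [Equiv.swap_apply_of_ne_of_ne h h2]
      rw [Fin.ne_iff_vne] at h h2
      simp only [Fin.coe_castSucc, Fin.val_succ] at h h2
      rw [if_neg h, if_neg h2]

lemma walkPerm_snoc (n t : ℕ) (v : Fin t → Fin n) (m : Fin n) :
    walkPerm n (t+1) (Fin.snoc v m) = walkPerm n t v * adjT n m := by
  unfold walkPerm
  rw [List.ofFn_succ']
  simp

/-- Splitting off the last letter of a word. -/
def snocEquiv (n t : ℕ) : ((Fin t → Fin n) × Fin n) ≃ (Fin (t+1) → Fin n) where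
  toFun p := Fin.snoc p.1 p.2
  invFun w := (Fin.init w, w (Fin.last t))
  left_inv p := by simp
  right_inv w := by simp [Fin.snoc_init_self]

lemma pWalk_succ (n t : ℕ) (i j : Fin (n + 1)) :
    pWalk n (t+1) i j = (1/(n:ℝ)) * ∑ m : Fin n, pWalk n t (adjT n m i) (adjT n m j) := by
  have hcard : (Finset.univ.filter fun w : Fin (t+1) → Fin n =>
        walkPerm n (t+1) w i < walkPerm n (t+1) w j).card
      = ∑ m : Fin n, (Finset.univ.filter fun v : Fin t → Fin n =>
          walkPerm n t v (adjT n m i) < walkPerm n t v (adjT n m j)).card := by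
    rw [Finset.card_filter]
    rw [← Equiv.sum_comp (snocEquiv n t)
      (fun w => if walkPerm n (t+1) w i < walkPerm n (t+1) w j then 1 else 0)]
    rw [Fintype.sum_prod_type_right]
    refine Finset.sum_congr rfl fun m _ => ?_
    rw [Finset.card_filter]
    refine Finset.sum_congr rfl fun v _ => ?_
    simp [snocEquiv, walkPerm_snoc, Equiv.Perm.mul_apply]
  unfold pWalk
  rw [hcard]
  push_cast
  rw [Finset.sum_div, Finset.mul_sum]
  refine Finset.sum_congr rfl fun m _ => ?_
  rw [pow_succ]
  field_simp

/-- The set of indices `m` for which `s_m` moves position `i` or position `j`. -/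
def bdry (n : ℕ) (i j : Fin (n + 1)) : Finset (Fin n) :=
  Finset.univ.filter fun m => (m:ℕ)+1 = (i:ℕ) ∨ (m:ℕ) = (i:ℕ) ∨ (m:ℕ)+1 = (j:ℕ) ∨ (m:ℕ) = (j:ℕ)

lemma grid_eq_image (n : ℕ) (i j : Fin (n + 1))
    (hij : (i : ℕ) + 2 ≤ (j : ℕ) ∨ (j : ℕ) + 2 ≤ (i : ℕ)) :
    gridNbrs n i j = (bdry n i j).image (fun m => (adjT n m i, adjT n m j)) := by
  ext q
  simp only [gridNbrs, bdry, Finset.mem_filter, Finset.mem_univ, true_and, Finset.mem_image]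
  constructor
  · rintro (⟨h1, h2 | h2⟩ | ⟨h1, h2 | h2⟩)
    · have h1v : (q.1:ℕ) = (i:ℕ) := by rw [h1]
      have hlt : (q.2:ℕ) < n := by omega
      have hv : ((⟨(q.2:ℕ), hlt⟩ : Fin n) : ℕ) = (q.2:ℕ) := rfl
      refine ⟨⟨(q.2:ℕ), hlt⟩, by omega, Prod.ext (Fin.ext ?_) (Fin.ext ?_)⟩ <;>
        rw [adjT_val] <;> split_ifs <;> omega
    · have h1v : (q.1:ℕ) = (i:ℕ) := by rw [h1]
      have hlt : (j:ℕ) < n := by omega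
      have hv : ((⟨(j:ℕ), hlt⟩ : Fin n) : ℕ) = (j:ℕ) := rfl
      refine ⟨⟨(j:ℕ), hlt⟩, by omega, Prod.ext (Fin.ext ?_) (Fin.ext ?_)⟩ <;>
        rw [adjT_val] <;> split_ifs <;> omega
    · have h1v : (q.2:ℕ) = (j:ℕ) := by rw [h1]
      have hlt : (q.1:ℕ) < n := by omega
      have hv : ((⟨(q.1:ℕ), hlt⟩ : Fin n) : ℕ) = (q.1:ℕ) := rfl
      refine ⟨⟨(q.1:ℕ), hlt⟩, by omega, Prod.ext (Fin.ext ?_) (Fin.ext ?_)⟩ <;>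
        rw [adjT_val] <;> split_ifs <;> omega
    · have h1v : (q.2:ℕ) = (j:ℕ) := by rw [h1]
      have hlt : (i:ℕ) < n := by omega
      have hv : ((⟨(i:ℕ), hlt⟩ : Fin n) : ℕ) = (i:ℕ) := rfl
      refine ⟨⟨(i:ℕ), hlt⟩, by omega, Prod.ext (Fin.ext ?_) (Fin.ext ?_)⟩ <;>
        rw [adjT_val] <;> split_ifs <;> omega
  · rintro ⟨m, hm, rfl⟩
    simp only [Fin.ext_iff, adjT_val]
    split_ifs <;> omega

lemma phi_injOn (n : ℕ) (i j : Fin (n + 1))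
    (hij : (i : ℕ) + 2 ≤ (j : ℕ) ∨ (j : ℕ) + 2 ≤ (i : ℕ)) :
    ∀ m1 ∈ bdry n i j, ∀ m2 ∈ bdry n i j,
      (adjT n m1 i, adjT n m1 j) = (adjT n m2 i, adjT n m2 j) → m1 = m2 := by
  intro m1 hm1 m2 hm2 heq
  simp only [bdry, Finset.mem_filter, Finset.mem_univ, true_and] at hm1 hm2
  injection heq with ea eb
  have e1 := congrArg Fin.val ea
  have e2 := congrArg Fin.val eb
  rw [adjT_val, adjT_val] at e1 e2
  apply Fin.ext
  split_ifs at e1 e2 <;> omega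

theorem prob_heat_recursion (n t : ℕ) (hn : 1 ≤ n) (i j : Fin (n + 1))
    (hij : (i : ℕ) + 2 ≤ (j : ℕ) ∨ (j : ℕ) + 2 ≤ (i : ℕ)) :
    pWalk n (t + 1) i j
      = pWalk n t i j
        + (1 / (n : ℝ)) * ∑ q ∈ gridNbrs n i j, (pWalk n t q.1 q.2 - pWalk n t i j) := by
  have hn0 : (n : ℝ) ≠ 0 := by positivity
  rw [pWalk_succ]
  -- split the sum over all m into boundary and interior
  have hsplit := Finset.sum_sdiff (f := fun m : Fin n => pWalk n t (adjT n m i) (adjT n m j))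
    (Finset.subset_univ (bdry n i j))
  -- interior terms are all pWalk n t i j
  have hout : ∀ m ∈ Finset.univ \ bdry n i j,
      pWalk n t (adjT n m i) (adjT n m j) = pWalk n t i j := by
    intro m hm
    simp only [bdry, Finset.mem_sdiff, Finset.mem_univ, true_and, Finset.mem_filter,
      not_or] at hm
    have hi : adjT n m i = i := by
      apply Fin.ext; rw [adjT_val]; split_ifs <;> omega
    have hj : adjT n m j = j := by
      apply Fin.ext; rw [adjT_val]; split_ifs <;> omega
    rw [hi, hj]
  -- boundary terms biject with grid neighbors
  have hbdry : ∑ m ∈ bdry n i j, pWalk n t (adjT n m i) (adjT n m j)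
      = ∑ q ∈ gridNbrs n i j, pWalk n t q.1 q.2 := by
    rw [grid_eq_image n i j hij,
      Finset.sum_image (fun m1 h1 m2 h2 h => phi_injOn n i j hij m1 h1 m2 h2 h)]
  have hcardeq : (gridNbrs n i j).card = (bdry n i j).card := by
    rw [grid_eq_image n i j hij,
      Finset.card_image_of_injOn (fun m1 h1 m2 h2 h => phi_injOn n i j hij m1 h1 m2 h2 h)]
  have hcle : (bdry n i j).card ≤ n := by
    simpa using Finset.card_le_univ (bdry n i j)
  have hcdiff : ((Finset.univ \ bdry n i j).card : ℝ) = (n : ℝ) - (gridNbrs n i j).card := by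
    rw [Finset.card_sdiff_of_subset (Finset.subset_univ _), hcardeq]
    have : (Finset.univ : Finset (Fin n)).card = n := by simp
    rw [this, Nat.cast_sub (hcardeq ▸ hcle)]
  calc (1/(n:ℝ)) * ∑ m : Fin n, pWalk n t (adjT n m i) (adjT n m j)
      = (1/(n:ℝ)) * (∑ m ∈ Finset.univ \ bdry n i j, pWalk n t (adjT n m i) (adjT n m j)
          + ∑ m ∈ bdry n i j, pWalk n t (adjT n m i) (adjT n m j)) := by rw [hsplit]
    _ = (1/(n:ℝ)) * (((n:ℝ) - (gridNbrs n i j).card) * pWalk n t i j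
          + ∑ q ∈ gridNbrs n i j, pWalk n t q.1 q.2) := by
        rw [Finset.sum_congr rfl hout, Finset.sum_const, nsmul_eq_mul, hcdiff, hbdry]
    _ = pWalk n t i j
        + (1 / (n : ℝ)) * ∑ q ∈ gridNbrs n i j, (pWalk n t q.1 q.2 - pWalk n t i j) := by
        rw [Finset.sum_sub_distrib, Finset.sum_const, nsmul_eq_mul]
        field_simp
        ring
end

section
/- In the heat flow process on the (n+1)×(n+1) grid graph with conductivity x and initial values 1 above the diagonal, 0 below, 1/2 on the diagonal, the total heat below the diagonal after one step is E_1(x) = n·x, and after two steps it is E_2(x) = 2n·x − 2(n+1)·x² + 2x² (for n ≥ 2, equivalently E_2(x) = 2n·x − 2n·x²). -/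
/- ### Auxiliary summation lemmas over `Fin (n+1)` -/

lemma fin_sum_eq (n m : ℕ) (g : ℕ → ℝ) :
    (∑ a : Fin (n+1), if (a : ℕ) = m then g a else 0) = if m ≤ n then g m else 0 := by
  by_cases hm : m ≤ n
  · rw [if_pos hm]
    have h : ∀ a : Fin (n+1), ((a : ℕ) = m) = (a = (⟨m, by omega⟩ : Fin (n+1))) := by
      intro a; simp [Fin.ext_iff]
    calc (∑ a : Fin (n+1), if (a : ℕ) = m then g a else 0)
        = ∑ a : Fin (n+1), if a = (⟨m, by omega⟩ : Fin (n+1)) then g a else 0 :=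
          Finset.sum_congr rfl fun a _ => if_congr (iff_of_eq (h a)) rfl rfl
      _ = g m := by rw [Finset.sum_ite_eq']; simp
  · rw [if_neg hm]
    have h : ∀ a : Fin (n+1), ¬((a : ℕ) = m) := by
      intro a; have := a.isLt; omega
    simp [h]

lemma aux_pred (n m : ℕ) (hm : m ≤ n) (g : ℕ → ℝ) :
    (∑ b : Fin (n+1), if (b : ℕ) + 1 = m then g b else 0)
      = if 1 ≤ m then g (m-1) else 0 := by
  by_cases h1 : 1 ≤ m
  · rw [if_pos h1]
    have h : ∀ b : Fin (n+1), ((b : ℕ) + 1 = m) = ((b : ℕ) = m - 1) := by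
      intro b; have := b.isLt; simp only [eq_iff_iff]; omega
    calc (∑ b : Fin (n+1), if (b : ℕ) + 1 = m then g b else 0)
        = ∑ b : Fin (n+1), if (b : ℕ) = m - 1 then g b else 0 :=
          Finset.sum_congr rfl fun b _ => if_congr (iff_of_eq (h b)) rfl rfl
      _ = _ := by rw [fin_sum_eq, if_pos (by omega)]
  · rw [if_neg h1]
    have h : ∀ b : Fin (n+1), ¬((b : ℕ) + 1 = m) := by intro b; omega
    simp [h]

lemma aux_succ (n m : ℕ) (g : ℕ → ℝ) :
    (∑ b : Fin (n+1), if m + 1 = (b : ℕ) then g b else 0)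
      = if m + 1 ≤ n then g (m+1) else 0 := by
  have h : ∀ b : Fin (n+1), (m + 1 = (b : ℕ)) = ((b : ℕ) = m + 1) := by
    intro b; simp only [eq_iff_iff]; omega
  calc (∑ b : Fin (n+1), if m + 1 = (b : ℕ) then g b else 0)
      = ∑ b : Fin (n+1), if (b : ℕ) = m + 1 then g b else 0 :=
        Finset.sum_congr rfl fun b _ => if_congr (iff_of_eq (h b)) rfl rfl
    _ = _ := fin_sum_eq n (m+1) g

/- ### Summing over the grid neighbors -/

lemma sum_gridNbrs (n : ℕ) (i j : Fin (n+1)) (g : ℕ → ℕ → ℝ) :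
    ∑ q ∈ gridNbrs n i j, g q.1 q.2 =
      ((if 1 ≤ (j:ℕ) then g i ((j:ℕ)-1) else 0) + (if (j:ℕ)+1 ≤ n then g i ((j:ℕ)+1) else 0))
      + ((if 1 ≤ (i:ℕ) then g ((i:ℕ)-1) j else 0) + (if (i:ℕ)+1 ≤ n then g ((i:ℕ)+1) j else 0)) := by
  rw [gridNbrs, Finset.sum_filter, Fintype.sum_prod_type]
  have key : ∀ a b : Fin (n+1),
      (if ((a = i ∧ ((b:ℕ) + 1 = (j:ℕ) ∨ (j:ℕ) + 1 = (b:ℕ))) ∨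
          (b = j ∧ ((a:ℕ) + 1 = (i:ℕ) ∨ (i:ℕ) + 1 = (a:ℕ)))) then g a b else 0)
      = ((if a = i then (if (b:ℕ) + 1 = (j:ℕ) then g a b else 0) else 0)
        + (if a = i then (if (j:ℕ) + 1 = (b:ℕ) then g a b else 0) else 0))
        + ((if b = j then (if (a:ℕ) + 1 = (i:ℕ) then g a b else 0) else 0)
        + (if b = j then (if (i:ℕ) + 1 = (a:ℕ) then g a b else 0) else 0)) := by
    intro a b
    by_cases h1 : a = i <;> by_cases h2 : b = j <;>
      by_cases h3 : (b:ℕ) + 1 = (j:ℕ) <;> by_cases h4 : (j:ℕ) + 1 = (b:ℕ) <;>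
      by_cases h5 : (a:ℕ) + 1 = (i:ℕ) <;> by_cases h6 : (i:ℕ) + 1 = (a:ℕ) <;>
      simp_all <;> try omega
  calc (∑ a : Fin (n+1), ∑ b : Fin (n+1),
        if ((a = i ∧ ((b:ℕ) + 1 = (j:ℕ) ∨ (j:ℕ) + 1 = (b:ℕ))) ∨
          (b = j ∧ ((a:ℕ) + 1 = (i:ℕ) ∨ (i:ℕ) + 1 = (a:ℕ)))) then g a b else 0)
      = ∑ a : Fin (n+1), ∑ b : Fin (n+1),
        (((if a = i then (if (b:ℕ) + 1 = (j:ℕ) then g a b else 0) else 0)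
        + (if a = i then (if (j:ℕ) + 1 = (b:ℕ) then g a b else 0) else 0))
        + ((if b = j then (if (a:ℕ) + 1 = (i:ℕ) then g a b else 0) else 0)
        + (if b = j then (if (i:ℕ) + 1 = (a:ℕ) then g a b else 0) else 0))) :=
        Finset.sum_congr rfl fun a _ => Finset.sum_congr rfl fun b _ => key a b
    _ = _ := by
        simp only [Finset.sum_add_distrib]
        have e1 : ∀ (h : Fin (n+1) → Fin (n+1) → ℝ),
           (∑ a : Fin (n+1), ∑ b : Fin (n+1), if a = i then h a b else 0)
             = ∑ b : Fin (n+1), h i b := by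
          intro h
          have h' : ∀ a : Fin (n+1), (∑ b : Fin (n+1), if a = i then h a b else 0)
              = if a = i then (∑ b : Fin (n+1), h a b) else 0 := by
            intro a; split_ifs <;> simp
          rw [Finset.sum_congr rfl fun a _ => h' a, Finset.sum_ite_eq' Finset.univ i
             (fun a => ∑ b : Fin (n+1), h a b), if_pos (Finset.mem_univ i)]
        have e2 : ∀ (h : Fin (n+1) → Fin (n+1) → ℝ),
           (∑ a : Fin (n+1), ∑ b : Fin (n+1), if b = j then h a b else 0)
             = ∑ a : Fin (n+1), h a j := by
          intro h
          refine Finset.sum_congr rfl fun a _ => ?_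
          rw [Finset.sum_ite_eq' Finset.univ j (fun b => h a b), if_pos (Finset.mem_univ j)]
        rw [e1, e1, e2, e2,
          aux_pred n (j:ℕ) (Nat.lt_succ_iff.mp j.isLt) (fun m => g i m),
          aux_succ n (j:ℕ) (fun m => g i m),
          aux_pred n (i:ℕ) (Nat.lt_succ_iff.mp i.isLt) (fun m => g m j),
          aux_succ n (i:ℕ) (fun m => g m j)]

/- ### The extension of a grid function to `ℕ × ℕ` -/

noncomputable def extF (n : ℕ) (f : Fin (n+1) → Fin (n+1) → ℝ) (a b : ℕ) : ℝ :=
  if h : a < n+1 ∧ b < n+1 then f ⟨a, h.1⟩ ⟨b, h.2⟩ else 0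

lemma extF_eq (n : ℕ) (f : Fin (n+1) → Fin (n+1) → ℝ) (a b : ℕ) (ha : a < n+1) (hb : b < n+1) :
    extF n f a b = f ⟨a, ha⟩ ⟨b, hb⟩ := dif_pos ⟨ha, hb⟩

lemma extF_val (n : ℕ) (f : Fin (n+1) → Fin (n+1) → ℝ) (i j : Fin (n+1)) :
    extF n f (i : ℕ) (j : ℕ) = f i j := by
  rw [extF_eq n f i j i.isLt j.isLt]

/- ### The pointwise profiles after 0, 1, 2 steps -/

noncomputable def p0 (a b : ℕ) : ℝ := if a < b then 1 else if b < a then 0 else 1/2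

noncomputable def f1 (x : ℝ) (a b : ℕ) : ℝ :=
  if a = b then 1/2 else if a = b+1 then x else if b = a+1 then 1-x else if b < a then 0 else 1

noncomputable def f2 (x : ℝ) (n a b : ℕ) : ℝ :=
  if a = b+1 then 2*x - 4*x^2 + (if b = 0 then x^2 else 0) + (if b+1 = n then x^2 else 0)
  else if a = b+2 then 2*x^2 else 0

lemma p0_lt {a b : ℕ} (h : a < b) : p0 a b = 1 := by rw [p0, if_pos h]

lemma p0_gt {a b : ℕ} (h : b < a) : p0 a b = 0 := by
  rw [p0, if_neg (by omega), if_pos h]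

lemma f1_eq_half (x : ℝ) {a b : ℕ} (h : a = b) : f1 x a b = 1/2 := by
  rw [f1, if_pos h]

lemma f1_eq_x (x : ℝ) {a b : ℕ} (h : a = b+1) : f1 x a b = x := by
  rw [f1, if_neg (by omega), if_pos h]

lemma f1_eq_zero (x : ℝ) {a b : ℕ} (h : b+2 ≤ a) : f1 x a b = 0 := by
  rw [f1, if_neg (by omega), if_neg (by omega), if_neg (by omega), if_pos (by omega)]

lemma core_identity (x : ℝ) (n a b : ℕ) (ha : a ≤ n) (hb : b ≤ n) :
    p0 a b + x * (((if 1 ≤ b then p0 a (b-1) - p0 a b else 0)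
      + (if b+1 ≤ n then p0 a (b+1) - p0 a b else 0))
      + ((if 1 ≤ a then p0 (a-1) b - p0 a b else 0)
      + (if a+1 ≤ n then p0 (a+1) b - p0 a b else 0))) = f1 x a b := by
  rcases (show a = b ∨ a = b+1 ∨ b = a+1 ∨ b+2 ≤ a ∨ a+2 ≤ b by omega) with h|h|h|h|h
  · subst h
    simp only [p0, f1]
    split_ifs <;> first | omega | ring
  · subst h
    simp only [p0, f1]
    norm_num
    split_ifs <;> first | omega | ring
  · subst h
    simp only [p0, f1]
    norm_num
    split_ifs <;> first | omega | ring
  · rw [p0_gt (show b < a by omega), p0_gt (show b-1 < a by omega),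
      p0_gt (show b+1 < a by omega), p0_gt (show b < a-1 by omega),
      p0_gt (show b < a+1 by omega), f1,
      if_neg (show ¬ a = b by omega), if_neg (show ¬ a = b+1 by omega),
      if_neg (show ¬ b = a+1 by omega), if_pos (show b < a by omega)]
    split_ifs <;> ring
  · rw [p0_lt (show a < b by omega), p0_lt (show a < b-1 by omega),
      p0_lt (show a < b+1 by omega), p0_lt (show a-1 < b by omega),
      p0_lt (show a+1 < b by omega), f1,
      if_neg (show ¬ a = b by omega), if_neg (show ¬ a = b+1 by omega),
      if_neg (show ¬ b = a+1 by omega), if_neg (show ¬ b < a by omega)]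
    split_ifs <;> ring

lemma core2 (x : ℝ) (n a b : ℕ) (hba : b < a) (ha : a ≤ n) :
    f1 x a b + x * (((if 1 ≤ b then f1 x a (b-1) - f1 x a b else 0)
      + (if b+1 ≤ n then f1 x a (b+1) - f1 x a b else 0))
      + ((if 1 ≤ a then f1 x (a-1) b - f1 x a b else 0)
      + (if a+1 ≤ n then f1 x (a+1) b - f1 x a b else 0))) = f2 x n a b := by
  rcases (show a = b+1 ∨ a = b+2 ∨ b+3 ≤ a by omega) with h|h|h
  · subst h
    rw [f1_eq_x x (show b+1 = b+1 from rfl),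
      f1_eq_half x (show b+1 = b+1 from rfl),
      f1_eq_half x (show b+1-1 = b by omega),
      f1_eq_zero x (show b+2 ≤ b+1+1 by omega),
      if_pos (show 1 ≤ b+1 by omega), if_pos (show b+1 ≤ n from ha),
      f2, if_pos (show b+1 = b+1 from rfl)]
    by_cases hb0 : 1 ≤ b
    · rw [if_pos hb0, f1_eq_zero x (show (b-1)+2 ≤ b+1 by omega),
        if_neg (show ¬ b = 0 by omega)]
      by_cases hg2 : b+1+1 ≤ n
      · rw [if_pos hg2, if_neg (show ¬ b+1 = n by omega)]; ring
      · rw [if_neg hg2, if_pos (show b+1 = n by omega)]; ring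
    · rw [if_neg hb0, if_pos (show b = 0 by omega)]
      by_cases hg2 : b+1+1 ≤ n
      · rw [if_pos hg2, if_neg (show ¬ b+1 = n by omega)]; ring
      · rw [if_neg hg2, if_pos (show b+1 = n by omega)]; ring
  · subst h
    rw [f1_eq_zero x (show b+2 ≤ b+2 by omega),
      f1_eq_zero x (show (b-1)+2 ≤ b+2 by omega),
      f1_eq_x x (show b+2 = (b+1)+1 by omega),
      f1_eq_x x (show b+2-1 = b+1 by omega),
      f1_eq_zero x (show b+2 ≤ b+2+1 by omega),
      if_pos (show b+1 ≤ n by omega), if_pos (show 1 ≤ b+2 by omega),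
      f2, if_neg (show ¬ b+2 = b+1 by omega), if_pos (show b+2 = b+2 from rfl)]
    split_ifs <;> ring
  · rw [f1_eq_zero x (show b+2 ≤ a by omega),
      f1_eq_zero x (show (b-1)+2 ≤ a by omega),
      f1_eq_zero x (show (b+1)+2 ≤ a by omega),
      f1_eq_zero x (show b+2 ≤ a-1 by omega),
      f1_eq_zero x (show b+2 ≤ a+1 by omega),
      f2, if_neg (show ¬ a = b+1 by omega), if_neg (show ¬ a = b+2 by omega)]
    split_ifs <;> ring

/- ### The recurrence, transported to ℕ coordinates -/

section
variable {n : ℕ} {x : ℝ} {P : ℕ → Fin (n + 1) → Fin (n + 1) → ℝ}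

lemma rec' (hrec : ∀ t i j, P (t + 1) i j
      = P t i j + x * ∑ q ∈ gridNbrs n i j, (P t q.1 q.2 - P t i j))
    (t a b : ℕ) (ha : a ≤ n) (hb : b ≤ n) :
    extF n (P (t+1)) a b = extF n (P t) a b + x *
      (((if 1 ≤ b then extF n (P t) a (b-1) - extF n (P t) a b else 0)
      + (if b+1 ≤ n then extF n (P t) a (b+1) - extF n (P t) a b else 0))
      + ((if 1 ≤ a then extF n (P t) (a-1) b - extF n (P t) a b else 0)
      + (if a+1 ≤ n then extF n (P t) (a+1) b - extF n (P t) a b else 0))) := by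
  have ha' : a < n+1 := by omega
  have hb' : b < n+1 := by omega
  have hsum : ∀ q ∈ gridNbrs n ⟨a, ha'⟩ ⟨b, hb'⟩,
      P t q.1 q.2 - P t ⟨a, ha'⟩ ⟨b, hb'⟩
        = extF n (P t) (q.1 : ℕ) (q.2 : ℕ) - extF n (P t) a b := fun q _ => by
    rw [extF_val, extF_eq n (P t) a b ha' hb']
  calc extF n (P (t+1)) a b = P (t+1) ⟨a, ha'⟩ ⟨b, hb'⟩ := extF_eq ..
    _ = P t ⟨a, ha'⟩ ⟨b, hb'⟩ + x * ∑ q ∈ gridNbrs n ⟨a, ha'⟩ ⟨b, hb'⟩,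
        (extF n (P t) (q.1 : ℕ) (q.2 : ℕ) - extF n (P t) a b) := by
        rw [hrec, Finset.sum_congr rfl hsum]
    _ = _ := by
        rw [sum_gridNbrs n ⟨a, ha'⟩ ⟨b, hb'⟩ (fun u v => extF n (P t) u v - extF n (P t) a b),
          ← extF_eq n (P t) a b ha' hb']

lemma p0_eq (h0 : ∀ i j, P 0 i j = if i < j then 1 else if j < i then 0 else 1 / 2)
    (a b : ℕ) (ha : a ≤ n) (hb : b ≤ n) : extF n (P 0) a b = p0 a b := by
  rw [extF_eq n (P 0) a b (by omega) (by omega), h0, p0]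
  simp [Fin.mk_lt_mk]

lemma p1_eq (h0 : ∀ i j, P 0 i j = if i < j then 1 else if j < i then 0 else 1 / 2)
    (hrec : ∀ t i j, P (t + 1) i j
      = P t i j + x * ∑ q ∈ gridNbrs n i j, (P t q.1 q.2 - P t i j))
    (a b : ℕ) (ha : a ≤ n) (hb : b ≤ n) :
    extF n (P 1) a b = f1 x a b := by
  have e2 : (if b+1 ≤ n then extF n (P 0) a (b+1) - extF n (P 0) a b else 0)
      = (if b+1 ≤ n then p0 a (b+1) - p0 a b else 0) := by
    split_ifs with h
    · rw [p0_eq h0 a (b+1) ha (by omega), p0_eq h0 a b ha hb]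
    · rfl
  have e4 : (if a+1 ≤ n then extF n (P 0) (a+1) b - extF n (P 0) a b else 0)
      = (if a+1 ≤ n then p0 (a+1) b - p0 a b else 0) := by
    split_ifs with h
    · rw [p0_eq h0 (a+1) b (by omega) hb, p0_eq h0 a b ha hb]
    · rfl
  rw [rec' hrec 0 a b ha hb, e2, e4, p0_eq h0 a (b-1) ha (by omega),
    p0_eq h0 (a-1) b (by omega) hb, p0_eq h0 a b ha hb]
  exact core_identity x n a b ha hb

lemma p2_eq (h0 : ∀ i j, P 0 i j = if i < j then 1 else if j < i then 0 else 1 / 2)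
    (hrec : ∀ t i j, P (t + 1) i j
      = P t i j + x * ∑ q ∈ gridNbrs n i j, (P t q.1 q.2 - P t i j))
    (a b : ℕ) (hba : b < a) (ha : a ≤ n) :
    extF n (P 2) a b = f2 x n a b := by
  have hb : b ≤ n := by omega
  have e2 : (if b+1 ≤ n then extF n (P 1) a (b+1) - extF n (P 1) a b else 0)
      = (if b+1 ≤ n then f1 x a (b+1) - f1 x a b else 0) := by
    split_ifs with h
    · rw [p1_eq h0 hrec a (b+1) ha (by omega), p1_eq h0 hrec a b ha hb]
    · rfl
  have e4 : (if a+1 ≤ n then extF n (P 1) (a+1) b - extF n (P 1) a b else 0)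
      = (if a+1 ≤ n then f1 x (a+1) b - f1 x a b else 0) := by
    split_ifs with h
    · rw [p1_eq h0 hrec (a+1) b (by omega) hb, p1_eq h0 hrec a b ha hb]
    · rfl
  rw [rec' hrec 1 a b ha hb, e2, e4, p1_eq h0 hrec a (b-1) ha (by omega),
    p1_eq h0 hrec (a-1) b (by omega) hb, p1_eq h0 hrec a b ha hb]
  exact core2 x n a b hba ha

end

/- ### The two total sums -/

lemma tri_f1 (x : ℝ) (a b : ℕ) :
    (if b < a then f1 x a b else 0) = if a = b+1 then x else 0 := by
  by_cases h : a = b+1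
  · rw [if_pos h, if_pos (by omega), f1_eq_x x h]
  · rw [if_neg h]
    by_cases h2 : b < a
    · rw [if_pos h2, f1_eq_zero x (by omega)]
    · rw [if_neg h2]

lemma sum1 (n : ℕ) (x : ℝ) :
    (∑ i : Fin (n+1), ∑ j : Fin (n+1), if (i:ℕ) = (j:ℕ)+1 then x else 0) = n * x := by
  rw [Finset.sum_comm]
  rw [Finset.sum_congr rfl fun (j : Fin (n+1)) _ => fin_sum_eq n ((j:ℕ)+1) (fun _ => x)]
  rw [Fin.sum_univ_eq_sum_range (fun k => if k+1 ≤ n then x else 0) (n+1)]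
  rw [Finset.sum_range_succ, if_neg (by omega), add_zero]
  rw [Finset.sum_congr rfl (fun k hk => if_pos (by
    have := Finset.mem_range.mp hk; omega))]
  rw [Finset.sum_const, Finset.card_range, nsmul_eq_mul]

lemma sum2 (n : ℕ) (hn : 2 ≤ n) (x : ℝ) :
    (∑ i : Fin (n+1), ∑ j : Fin (n+1), f2 x n i j) = 2*n*x - 2*n*x^2 := by
  have split : ∀ a b : ℕ, f2 x n a b
      = (if a = b+1 then 2*x - 4*x^2 + (if b = 0 then x^2 else 0)
          + (if b+1 = n then x^2 else 0) else 0)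
        + (if a = b+2 then 2*x^2 else 0) := by
    intro a b
    rw [f2]
    by_cases h1 : a = b+1 <;> by_cases h2 : a = b+2
    · omega
    · rw [if_pos h1, if_pos h1, if_neg h2]; ring
    · rw [if_neg h1, if_neg h1, if_pos h2]; ring
    · rw [if_neg h1, if_neg h1, if_neg h2]; ring
  rw [Finset.sum_congr rfl fun (i : Fin (n+1)) _ =>
    Finset.sum_congr rfl fun (j : Fin (n+1)) _ => split (i:ℕ) (j:ℕ)]
  rw [Finset.sum_congr rfl fun (i : Fin (n+1)) _ => Finset.sum_add_distrib,
    Finset.sum_add_distrib]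
  have S1 : (∑ i : Fin (n+1), ∑ j : Fin (n+1),
      if (i:ℕ) = (j:ℕ)+1 then 2*x - 4*x^2 + (if (j:ℕ) = 0 then x^2 else 0)
        + (if (j:ℕ)+1 = n then x^2 else 0) else 0)
      = (n:ℝ)*(2*x - 4*x^2) + 2*x^2 := by
    rw [Finset.sum_comm]
    rw [Finset.sum_congr rfl fun (j : Fin (n+1)) _ => fin_sum_eq n ((j:ℕ)+1)
      (fun _ => 2*x - 4*x^2 + (if (j:ℕ) = 0 then x^2 else 0) + (if (j:ℕ)+1 = n then x^2 else 0))]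
    rw [Fin.sum_univ_eq_sum_range (fun k => if k+1 ≤ n then
      2*x - 4*x^2 + (if k = 0 then x^2 else 0) + (if k+1 = n then x^2 else 0) else 0) (n+1)]
    rw [Finset.sum_range_succ, if_neg (by omega), add_zero]
    rw [Finset.sum_congr rfl (fun k hk => if_pos (by
      have := Finset.mem_range.mp hk; omega))]
    rw [Finset.sum_add_distrib, Finset.sum_add_distrib]
    rw [Finset.sum_const, Finset.card_range, nsmul_eq_mul]
    rw [Finset.sum_ite_eq' (Finset.range n) 0 (fun _ => x^2), if_pos (by
      simp [Finset.mem_range]; omega)]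
    rw [Finset.sum_congr rfl (fun k hk => if_congr
      (show k+1 = n ↔ k = n-1 by omega) rfl rfl)]
    rw [Finset.sum_ite_eq' (Finset.range n) (n-1) (fun _ => x^2), if_pos (by
      simp [Finset.mem_range]; omega)]
    ring
  have S2 : (∑ i : Fin (n+1), ∑ j : Fin (n+1),
      if (i:ℕ) = (j:ℕ)+2 then 2*x^2 else 0) = ((n:ℝ)-1)*(2*x^2) := by
    rw [Finset.sum_comm]
    rw [Finset.sum_congr rfl fun (j : Fin (n+1)) _ => fin_sum_eq n ((j:ℕ)+2) (fun _ => 2*x^2)]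
    obtain ⟨m, rfl⟩ : ∃ m, n = m+2 := ⟨n-2, by omega⟩
    rw [Fin.sum_univ_eq_sum_range (fun k => if k+2 ≤ m+2 then 2*x^2 else 0) (m+2+1)]
    rw [Finset.sum_range_succ, if_neg (by omega), add_zero]
    rw [Finset.sum_range_succ, if_neg (by omega), add_zero]
    rw [Finset.sum_congr rfl (fun k hk => if_pos (by
      have := Finset.mem_range.mp hk; omega))]
    rw [Finset.sum_const, Finset.card_range, nsmul_eq_mul]
    push_cast
    ring
  rw [S1, S2]; ring

/- ### Main theorem -/

theorem heat_flow_first_two_steps (n : ℕ) (hn : 2 ≤ n) (x : ℝ)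
    (P : ℕ → Fin (n + 1) → Fin (n + 1) → ℝ)
    (h0 : ∀ i j, P 0 i j = if i < j then 1 else if j < i then 0 else 1 / 2)
    (hrec : ∀ t i j, P (t + 1) i j
      = P t i j + x * ∑ q ∈ gridNbrs n i j, (P t q.1 q.2 - P t i j)) :
    (∑ i : Fin (n + 1), ∑ j : Fin (n + 1), if j < i then P 1 i j else 0) = (n : ℝ) * x ∧
    (∑ i : Fin (n + 1), ∑ j : Fin (n + 1), if j < i then P 2 i j else 0)
      = 2 * (n : ℝ) * x - 2 * (n : ℝ) * x ^ 2 := by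
  constructor
  · have key : ∀ i j : Fin (n+1), (if j < i then P 1 i j else 0)
        = (if (i:ℕ) = (j:ℕ)+1 then x else 0) := by
      intro i j
      have hv : P 1 i j = f1 x (i:ℕ) (j:ℕ) := by
        rw [← extF_val n (P 1) i j]
        exact p1_eq h0 hrec (i:ℕ) (j:ℕ) (Nat.lt_succ_iff.mp i.isLt) (Nat.lt_succ_iff.mp j.isLt)
      rw [hv, ← tri_f1 x (i:ℕ) (j:ℕ)]
      exact if_congr Fin.lt_def rfl rfl
    rw [Finset.sum_congr rfl fun (i : Fin (n+1)) _ =>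
      Finset.sum_congr rfl fun (j : Fin (n+1)) _ => key i j]
    exact sum1 n x
  · have key : ∀ i j : Fin (n+1), (if j < i then P 2 i j else 0)
        = f2 x n (i:ℕ) (j:ℕ) := by
      intro i j
      by_cases h : (j:ℕ) < (i:ℕ)
      · have hv : P 2 i j = f2 x n (i:ℕ) (j:ℕ) := by
          rw [← extF_val n (P 2) i j]
          exact p2_eq h0 hrec (i:ℕ) (j:ℕ) h (Nat.lt_succ_iff.mp i.isLt)
        rw [if_pos (Fin.lt_def.mpr h), hv]
      · rw [if_neg (fun hc => h (Fin.lt_def.mp hc)), f2,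
          if_neg (by omega), if_neg (by omega)]
    rw [Finset.sum_congr rfl fun (i : Fin (n+1)) _ =>
      Finset.sum_congr rfl fun (j : Fin (n+1)) _ => key i j]
    exact sum2 n hn x
end
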